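/- arXiv:1712.03513 — 10 statements merged into one kernel-verified Lean document; each statement's English description precedes it below -/
import Mathlib

section
/- Let X be a distributive lattice and Y a conditionally complete lattice. Suppose Φ, Ψ : X → Y satisfy Φ(x) ≤ Ψ(x) for all x ∈ X, Φ(x ∨ y) ≤ Φ(x) ∨ Φ(y) for all x, y ∈ X, and Ψ(x) ∨ Ψ(y) ≤ Ψ(x ∨ y) for all x, y ∈ X. Then there exists a join homomorphism F : X → Y such that Φ(x) ≤ F(x) ≤ Ψ(x) for every x ∈ X. -/
/-!
Take `F x = sup {Φ z | z ≤ x}`. The supremum exists because `Ψ` is monotone (being super-join)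
and dominates `Φ`, so `Φ ≤ F ≤ Ψ` and `F` is monotone. For `z ≤ x ⊔ y` distributivity gives
`z = (z ⊓ x) ⊔ (z ⊓ y)`, hence `Φ z ≤ Φ (z ⊓ x) ⊔ Φ (z ⊓ y) ≤ F x ⊔ F y`, which is the
nontrivial half of `F (x ⊔ y) = F x ⊔ F y`.
-/

open Set

theorem monotone_of_sup_le_map_sup {X Y : Type*} [SemilatticeSup X] [SemilatticeSup Y]
    {Ψ : X → Y} (hΨ : ∀ x y, Ψ x ⊔ Ψ y ≤ Ψ (x ⊔ y)) : Monotone Ψ := fun a b hab =>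
  calc Ψ a ≤ Ψ a ⊔ Ψ b := le_sup_left
    _ ≤ Ψ (a ⊔ b) := hΨ a b
    _ = Ψ b := by rw [sup_eq_right.2 hab]

section SupBelow

variable {X Y : Type*} [ConditionallyCompleteLattice Y]

noncomputable def supBelow [Preorder X] (Φ : X → Y) (x : X) : Y := sSup (Φ '' Iic x)

theorem bddAbove_image_Iic_of_le_of_monotone [Preorder X] {Φ Ψ : X → Y}
    (hle : ∀ x, Φ x ≤ Ψ x) (hΨ : Monotone Ψ) (x : X) : BddAbove (Φ '' Iic x) :=
  ⟨Ψ x, forall_mem_image.2 fun _ hz => (hle _).trans (hΨ hz)⟩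

variable {Φ : X → Y}

theorem le_supBelow [Preorder X] {x z : X} (hbdd : BddAbove (Φ '' Iic x)) (hz : z ≤ x) :
    Φ z ≤ supBelow Φ x :=
  le_csSup hbdd (mem_image_of_mem Φ hz)

theorem supBelow_le [Preorder X] {x : X} {b : Y} (h : ∀ z ≤ x, Φ z ≤ b) :
    supBelow Φ x ≤ b :=
  csSup_le ((nonempty_Iic).image Φ) (forall_mem_image.2 h)

theorem supBelow_mono [Preorder X] (hbdd : ∀ x, BddAbove (Φ '' Iic x)) :
    Monotone (supBelow Φ) := fun _ y hxy =>
  supBelow_le fun _ hz => le_supBelow (hbdd y) (hz.trans hxy)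

theorem supBelow_sup [DistribLattice X] (hbdd : ∀ x, BddAbove (Φ '' Iic x))
    (hΦ : ∀ x y, Φ (x ⊔ y) ≤ Φ x ⊔ Φ y) (x y : X) :
    supBelow Φ (x ⊔ y) = supBelow Φ x ⊔ supBelow Φ y := by
  refine le_antisymm (supBelow_le fun z hz => ?_) ((supBelow_mono hbdd).le_map_sup x y)
  have hsplit : z = z ⊓ x ⊔ z ⊓ y := by rw [← inf_sup_left, inf_eq_left.2 hz]
  calc Φ z = Φ (z ⊓ x ⊔ z ⊓ y) := congrArg Φ hsplit
    _ ≤ Φ (z ⊓ x) ⊔ Φ (z ⊓ y) := hΦ _ _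
    _ ≤ supBelow Φ x ⊔ supBelow Φ y :=
      sup_le_sup (le_supBelow (hbdd x) inf_le_right) (le_supBelow (hbdd y) inf_le_right)

end SupBelow

/-- Lemma 1 (separation theorem): if `Φ ≤ Ψ`, `Φ` is sub-join and `Ψ` is super-join,
then some join homomorphism `F` separates them. -/
theorem separation_join_hom {X Y : Type*} [DistribLattice X]
    [ConditionallyCompleteLattice Y]
    (Φ Ψ : X → Y) (hle : ∀ x, Φ x ≤ Ψ x)
    (hΦ : ∀ x y, Φ (x ⊔ y) ≤ Φ x ⊔ Φ y)
    (hΨ : ∀ x y, Ψ x ⊔ Ψ y ≤ Ψ (x ⊔ y)) :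
    ∃ F : X → Y, (∀ x y, F (x ⊔ y) = F x ⊔ F y) ∧
      ∀ x, Φ x ≤ F x ∧ F x ≤ Ψ x := by
  have hΨmono := monotone_of_sup_le_map_sup hΨ
  have hbdd := bddAbove_image_Iic_of_le_of_monotone hle hΨmono
  exact ⟨supBelow Φ, supBelow_sup hbdd hΦ, fun x =>
    ⟨le_supBelow (hbdd x) le_rfl,
      supBelow_le fun _ hz => (hle _).trans (hΨmono hz)⟩⟩
end

section
/- Let X be a distributive lattice and Y a conditionally complete lattice. Suppose Φ, Ψ : X → Y satisfy Ψ(x) ≤ Φ(x) for all x ∈ X, Φ(x) ∧ Φ(y) ≤ Φ(x ∧ y) for all x, y ∈ X, and Ψ(x ∧ y) ≤ Ψ(x) ∧ Ψ(y) for all x, y ∈ X. Then there exists a meet homomorphism F : X → Y such that Ψ(x) ≤ F(x) ≤ Φ(x) for every x ∈ X. -/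
/-!
The separating meet homomorphism is `F x = ⨅_{z ≥ x} Φ z`, the greatest monotone minorant of `Φ`.
A sub-meet `Ψ` is monotone, so `Ψ x` bounds these infima from below and `Ψ ≤ F ≤ Φ`.
For `z ≥ x ⊓ y`, distributivity gives `z = (z ⊔ x) ⊓ (z ⊔ y)`, whence
`F x ⊓ F y ≤ Φ (z ⊔ x) ⊓ Φ (z ⊔ y) ≤ Φ z`; so `F x ⊓ F y ≤ F (x ⊓ y)`, and the reverse
inequality is monotonicity.
-/

open Set

theorem monotone_of_map_inf_le {X Y : Type*} [SemilatticeInf X] [SemilatticeInf Y]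
    {Ψ : X → Y} (hΨ : ∀ x y, Ψ (x ⊓ y) ≤ Ψ x ⊓ Ψ y) : Monotone Ψ := by
  intro a b hab
  simpa only [inf_eq_left.mpr hab] using (hΨ a b).trans inf_le_right

theorem bddBelow_image_Ici_of_monotone_le {X Y : Type*} [Preorder X] [Preorder Y]
    {Φ Ψ : X → Y} (hΨ : Monotone Ψ) (hle : ∀ x, Ψ x ≤ Φ x) (x : X) :
    BddBelow (Φ '' Ici x) := by
  refine ⟨Ψ x, ?_⟩
  rintro _ ⟨z, hz, rfl⟩
  exact (hΨ hz).trans (hle z)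

noncomputable def infAbove {X Y : Type*} [Preorder X] [InfSet Y] (Φ : X → Y) (x : X) : Y :=
  sInf (Φ '' Ici x)

namespace infAbove

variable {X Y : Type*} [ConditionallyCompleteLattice Y]

section Preorder

variable [Preorder X] {Φ : X → Y}

theorem le_apply {x z : X} (hbdd : BddBelow (Φ '' Ici x)) (hxz : x ≤ z) :
    infAbove Φ x ≤ Φ z :=
  csInf_le hbdd ⟨z, hxz, rfl⟩

theorem le_of_forall_le {x : X} {c : Y} (hc : ∀ z, x ≤ z → c ≤ Φ z) : c ≤ infAbove Φ x := by
  refine le_csInf ⟨Φ x, x, le_rfl, rfl⟩ ?_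
  rintro _ ⟨z, hz, rfl⟩
  exact hc z hz

theorem monotone (hbdd : ∀ x, BddBelow (Φ '' Ici x)) : Monotone (infAbove Φ) :=
  fun _ _ hab => le_of_forall_le fun _ hz => le_apply (hbdd _) (hab.trans hz)

end Preorder

theorem map_inf [DistribLattice X] {Φ : X → Y} (hbdd : ∀ x, BddBelow (Φ '' Ici x))
    (hΦ : ∀ x y, Φ x ⊓ Φ y ≤ Φ (x ⊓ y)) (x y : X) :
    infAbove Φ (x ⊓ y) = infAbove Φ x ⊓ infAbove Φ y := by
  refine le_antisymm ((monotone hbdd).map_inf_le x y) (le_of_forall_le fun z hz => ?_)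
  calc infAbove Φ x ⊓ infAbove Φ y ≤ Φ (z ⊔ x) ⊓ Φ (z ⊔ y) :=
        inf_le_inf (le_apply (hbdd x) le_sup_right) (le_apply (hbdd y) le_sup_right)
    _ ≤ Φ ((z ⊔ x) ⊓ (z ⊔ y)) := hΦ _ _
    _ = Φ z := by rw [← sup_inf_left, sup_eq_left.mpr hz]

end infAbove

/-- Dual separation theorem: if `Ψ ≤ Φ`, `Φ` is super-meet and `Ψ` is sub-meet,
then some meet homomorphism `F` separates them. -/
theorem separation_meet_hom {X Y : Type*} [DistribLattice X]
    [ConditionallyCompleteLattice Y]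
    (Φ Ψ : X → Y) (hle : ∀ x, Ψ x ≤ Φ x)
    (hΦ : ∀ x y, Φ x ⊓ Φ y ≤ Φ (x ⊓ y))
    (hΨ : ∀ x y, Ψ (x ⊓ y) ≤ Ψ x ⊓ Ψ y) :
    ∃ F : X → Y, (∀ x y, F (x ⊓ y) = F x ⊓ F y) ∧
      ∀ x, Ψ x ≤ F x ∧ F x ≤ Φ x := by
  have hΨmono := monotone_of_map_inf_le hΨ
  have hbdd := bddBelow_image_Ici_of_monotone_le hΨmono hle
  refine ⟨infAbove Φ, infAbove.map_inf hbdd hΦ,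
    fun x => ⟨?_, infAbove.le_apply (hbdd x) le_rfl⟩⟩
  exact infAbove.le_of_forall_le fun z hz => (hΨmono hz).trans (hle z)
end

section
/- Let L be a distributive lattice and B a complete Boolean algebra. Suppose Ψ₂, Φ₂, Φ₁, Ψ₁ : L → B satisfy Ψ₂(x) ≤ Φ₂(x) ≤ Φ₁(x) ≤ Ψ₁(x) for all x ∈ L, together with the inequalities Ψ₂(x ∧ y) ≤ Ψ₂(x) ∧ Ψ₂(y), Φ₂(x) ∧ Φ₂(y) ≤ Φ₂(x ∧ y), Φ₁(x ∨ y) ≤ Φ₁(x) ∨ Φ₁(y), and Ψ₁(x) ∨ Ψ₁(y) ≤ Ψ₁(x ∨ y) for all x, y ∈ L. Then there exists a lattice homomorphism H : L → B such that Ψ₂(x) ≤ H(x) ≤ Ψ₁(x) for every x ∈ L. -/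
/-!
The hypotheses on `Φ₂` and `Φ₁` are first upgraded to an inf-homomorphism
`f x = ⨆ {Φ₂ y | y ≤ x}` and a sup-homomorphism
`g x = ⨅ {Ψ₁ y₁ ⊔ ⋯ ⊔ Ψ₁ yₙ | x ≤ y₁ ⊔ ⋯ ⊔ yₙ}` with `Φ₂ ≤ f ≤ g ≤ Ψ₁`.
Then (Kubiś) a maximal inf-homomorphism `F` with `f ≤ F ≤ g`, which exists by Zorn's lemma,
also preserves joins. Maximality gives `b a ⊓ F y ≤ F (y ⊓ a)` for the largest admissible
`b a = ⨅ y, F y ⇨ g (y ⊓ a)`, and since `g` preserves joins, `F (a ⊔ c) ≤ b a ⊔ b c`,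
whence `F (a ⊔ c) ≤ F (a ⊔ c) ⊓ (b a ⊔ b c) ≤ F a ⊔ F c`.
-/

def InfHom.ofMonotone {α β : Type*} [Lattice α] [Lattice β] (f : α → β) (hf : Monotone f)
    (h : ∀ x y, f x ⊓ f y ≤ f (x ⊓ y)) : InfHom α β where
  toFun := f
  map_inf' x y := le_antisymm (hf.map_inf_le x y) (h x y)

def SupHom.ofMonotone {α β : Type*} [Lattice α] [Lattice β] (f : α → β) (hf : Monotone f)
    (h : ∀ x y, f (x ⊔ y) ≤ f x ⊔ f y) : SupHom α β where
  toFun := f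
  map_sup' x y := le_antisymm (h x y) (hf.le_map_sup x y)

theorem le_himp_sup_himp {β : Type*} [BooleanAlgebra β] {x p q r s : β}
    (h : x ⊓ (p ⊓ r) ≤ q ⊔ s) : x ≤ (p ⇨ q) ⊔ (r ⇨ s) := by
  have := le_himp_iff.2 h
  rwa [himp_eq, compl_inf, sup_sup_sup_comm, ← himp_eq, ← himp_eq] at this

namespace InfHom

variable {α β : Type*}

section Frame

variable [Lattice α] [Order.Frame β]

def envelope (φ : α → α) (hφ : Monotone φ) (h : α → β) (hh : ∀ x y, h x ⊓ h y ≤ h (x ⊓ y)) :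
    InfHom α β :=
  ofMonotone (fun x => ⨆ (y) (_ : φ y ≤ x), h y)
    (fun _ _ hx => iSup₂_mono' fun y hy => ⟨y, hy.trans hx, le_rfl⟩)
    (fun x x' => by
      simp only [iSup_inf_eq, inf_iSup_eq]
      exact iSup₂_le fun y' hy' => iSup₂_le fun y hy =>
        le_iSup₂_of_le (y ⊓ y')
          (le_inf ((hφ inf_le_left).trans hy) ((hφ inf_le_right).trans hy')) (hh y y'))

theorem le_envelope {φ : α → α} {hφ : Monotone φ} {h : α → β}
    {hh : ∀ x y, h x ⊓ h y ≤ h (x ⊓ y)} {x y : α} (hy : φ y ≤ x) : h y ≤ envelope φ hφ h hh x :=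
  le_iSup₂_of_le y hy le_rfl

theorem exists_maximal_le (f : InfHom α β) (g : α → β) (hfg : ⇑f ≤ g) :
    ∃ F : InfHom α β, f ≤ F ∧ Maximal (fun F : InfHom α β => ⇑F ≤ g) F := by
  refine zorn_le_nonempty₀ _ (fun c hcg hc _ _ => ?_) f hfg
  let ub : InfHom α β := ofMonotone (fun x => ⨆ F ∈ c, F x)
    (fun _ _ hxy => iSup₂_mono fun F _ => OrderHomClass.mono F hxy)
    (fun x y => by
      simp only [iSup_inf_eq, inf_iSup_eq]
      refine iSup₂_le fun F₂ h₂ => iSup₂_le fun F₁ h₁ => ?_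
      rcases hc.total h₁ h₂ with h | h
      · exact le_iSup₂_of_le F₂ h₂ ((inf_le_inf_right _ (h x)).trans (map_inf F₂ x y).ge)
      · exact le_iSup₂_of_le F₁ h₁ ((inf_le_inf_left _ (h y)).trans (map_inf F₁ x y).ge))
  exact ⟨ub, fun x => iSup₂_le fun F hF => hcg hF x, fun F hF x => le_iSup₂_of_le F hF le_rfl⟩

theorem le_map_inf_of_maximal {F : InfHom α β} {g : α → β} (hg : Monotone g)
    (hF : Maximal (fun F : InfHom α β => ⇑F ≤ g) F) {a : α} {e : β}
    (he : ∀ y, e ⊓ F y ≤ g (y ⊓ a)) (y : α) : e ⊓ F y ≤ F (y ⊓ a) := by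
  let K := envelope (· ⊓ a) (fun _ _ h => inf_le_inf_right a h) F fun x y => (map_inf F x y).ge
  have hFK : F ≤ K := fun x => le_envelope inf_le_left
  have hKg : ∀ x, e ⊓ K x ≤ g x := fun x => by
    change e ⊓ ⨆ (y) (_ : y ⊓ a ≤ x), F y ≤ g x
    rw [inf_iSup₂_eq]
    exact iSup₂_le fun y hy => (he y).trans (hg hy)
  -- on `e` this is `K`, off `e` it is `F`
  let F' := ofMonotone (fun x => (F x ⊔ e) ⊓ K x)
    (fun _ _ hxy =>
      inf_le_inf (sup_le_sup_right (OrderHomClass.mono F hxy) e) (OrderHomClass.mono K hxy))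
    (fun x y => by rw [inf_inf_inf_comm, ← sup_inf_right, map_inf, map_inf])
  have hF'g : ⇑F' ≤ g := fun x => calc
    (F x ⊔ e) ⊓ K x = F x ⊓ K x ⊔ e ⊓ K x := inf_sup_right _ _ _
    _ ≤ g x := sup_le (inf_le_left.trans (hF.prop x)) (hKg x)
  calc e ⊓ F y ≤ F' (y ⊓ a) :=
        le_inf (inf_le_left.trans le_sup_right) (inf_le_right.trans (le_envelope le_rfl))
    _ ≤ F (y ⊓ a) := hF.2 hF'g (fun x => le_inf le_sup_left (hFK x)) _

end Frame

theorem map_sup_le_of_maximal [DistribLattice α] [CompleteBooleanAlgebra β] {F : InfHom α β}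
    (g : SupHom α β) (hF : Maximal (fun F : InfHom α β => ⇑F ≤ ⇑g) F) (a c : α) :
    F (a ⊔ c) ≤ F a ⊔ F c := by
  let b : α → β := fun a => ⨅ y, F y ⇨ g (y ⊓ a)
  have hb : ∀ a y, b a ⊓ F y ≤ F (y ⊓ a) := fun a =>
    le_map_inf_of_maximal (OrderHomClass.mono g) hF fun y =>
      (inf_le_inf_right _ (iInf_le _ y)).trans himp_inf_le
  have hcover : F (a ⊔ c) ≤ b a ⊔ b c := by
    rw [iInf_sup_iInf]
    refine le_iInf fun ⟨u, v⟩ => le_himp_sup_himp ?_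
    calc F (a ⊔ c) ⊓ (F u ⊓ F v) = F ((a ⊔ c) ⊓ (u ⊓ v)) := by rw [map_inf, map_inf]
      _ ≤ g ((a ⊔ c) ⊓ (u ⊓ v)) := hF.prop _
      _ ≤ g (u ⊓ a ⊔ v ⊓ c) := OrderHomClass.mono g <| by
        rw [inf_sup_right]
        exact sup_le_sup (le_inf (inf_le_right.trans inf_le_left) inf_le_left)
          (le_inf (inf_le_right.trans inf_le_right) inf_le_left)
      _ = g (u ⊓ a) ⊔ g (v ⊓ c) := map_sup g _ _
  calc F (a ⊔ c) = (b a ⊔ b c) ⊓ F (a ⊔ c) := (inf_eq_right.2 hcover).symm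
    _ = b a ⊓ F (a ⊔ c) ⊔ b c ⊓ F (a ⊔ c) := inf_sup_right _ _ _
    _ ≤ F ((a ⊔ c) ⊓ a) ⊔ F ((a ⊔ c) ⊓ c) := sup_le_sup (hb a _) (hb c _)
    _ = F a ⊔ F c := by rw [inf_eq_right.2 le_sup_left, inf_eq_right.2 le_sup_right]

end InfHom

theorem LatticeHom.exists_between {α β : Type*} [DistribLattice α] [CompleteBooleanAlgebra β]
    (f : InfHom α β) (g : SupHom α β) (hfg : ⇑f ≤ ⇑g) :
    ∃ H : LatticeHom α β, ⇑f ≤ ⇑H ∧ ⇑H ≤ ⇑g := by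
  obtain ⟨F, hfF, hF⟩ := f.exists_maximal_le g hfg
  refine ⟨{ toFun := F
            map_sup' a c := le_antisymm (F.map_sup_le_of_maximal g hF a c)
              ((OrderHomClass.mono F).le_map_sup a c)
            map_inf' := map_inf F }, hfF, hF.prop⟩

section CoverEnvelope

variable {α β : Type*} [DistribLattice α] [Order.Coframe β]

/-- `IsCoverBound Ψ x b`: there is a finite cover `x ≤ y₁ ⊔ ⋯ ⊔ yₙ` with
`b = Ψ y₁ ⊔ ⋯ ⊔ Ψ yₙ`. -/
inductive IsCoverBound (Ψ : α → β) : α → β → Prop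
  | base (x : α) : IsCoverBound Ψ x (Ψ x)
  | of_le {x y : α} {b : β} : x ≤ y → IsCoverBound Ψ y b → IsCoverBound Ψ x b
  | sup {x y : α} {b c : β} :
      IsCoverBound Ψ x b → IsCoverBound Ψ y c → IsCoverBound Ψ (x ⊔ y) (b ⊔ c)

def coverEnvelope (Ψ : α → β) : SupHom α β :=
  SupHom.ofMonotone (fun x => sInf {b | IsCoverBound Ψ x b})
    (fun _ _ hxy => sInf_le_sInf fun _ hb => hb.of_le hxy)
    (fun x y => by
      rw [sInf_sup_sInf]
      exact le_iInf₂ fun p hp => sInf_le (hp.1.sup hp.2))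

theorem coverEnvelope_le (Ψ : α → β) (x : α) : coverEnvelope Ψ x ≤ Ψ x :=
  sInf_le (.base x)

theorem le_coverEnvelope {Φ Ψ : α → β} (hΦ : ∀ x y, Φ (x ⊔ y) ≤ Φ x ⊔ Φ y) (hΦΨ : Φ ≤ Ψ)
    (hΨ : Monotone Ψ) : Φ ≤ coverEnvelope Ψ := by
  have key : ∀ {y b}, IsCoverBound Ψ y b → ∀ x ≤ y, Φ x ≤ b := by
    intro y b h
    induction h with
    | base y => exact fun x hx => (hΦΨ x).trans (hΨ hx)
    | of_le hyz _ ih => exact fun x hx => ih x (hx.trans hyz)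
    | @sup y z b c _ _ ih₁ ih₂ =>
      intro x hx
      calc Φ x = Φ (x ⊓ y ⊔ x ⊓ z) := by rw [← inf_sup_left, inf_eq_left.2 hx]
        _ ≤ Φ (x ⊓ y) ⊔ Φ (x ⊓ z) := hΦ _ _
        _ ≤ b ⊔ c := sup_le_sup (ih₁ _ inf_le_right) (ih₂ _ inf_le_right)
  exact fun x => le_sInf fun b hb => key hb x le_rfl

end CoverEnvelope

theorem sandwich_lattice_hom_general {L B : Type*} [DistribLattice L]
    [CompleteBooleanAlgebra B]
    (Ψ₂ Φ₂ Φ₁ Ψ₁ : L → B)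
    (h21 : ∀ x, Ψ₂ x ≤ Φ₂ x) (h22 : ∀ x, Φ₂ x ≤ Φ₁ x) (h23 : ∀ x, Φ₁ x ≤ Ψ₁ x)
    (hΦ₂ : ∀ x y, Φ₂ x ⊓ Φ₂ y ≤ Φ₂ (x ⊓ y))
    (hΦ₁ : ∀ x y, Φ₁ (x ⊔ y) ≤ Φ₁ x ⊔ Φ₁ y)
    (hΨ₁ : ∀ x y, Ψ₁ x ⊔ Ψ₁ y ≤ Ψ₁ (x ⊔ y)) :
    ∃ H : L → B, (∀ x y, H (x ⊔ y) = H x ⊔ H y) ∧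
      (∀ x y, H (x ⊓ y) = H x ⊓ H y) ∧
      ∀ x, Ψ₂ x ≤ H x ∧ H x ≤ Ψ₁ x := by
  have hΨ₁_mono : Monotone Ψ₁ := fun x y hxy =>
    le_sup_left.trans ((hΨ₁ x y).trans_eq (by rw [sup_eq_right.2 hxy]))
  let f := InfHom.envelope id monotone_id Φ₂ hΦ₂
  let g := coverEnvelope Ψ₁
  have hΦ₁g : Φ₁ ≤ g := le_coverEnvelope hΦ₁ h23 hΨ₁_mono
  have hfg : ⇑f ≤ ⇑g := fun x =>
    iSup₂_le fun y hy => (h22 y).trans ((hΦ₁g y).trans (OrderHomClass.mono g hy))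
  obtain ⟨H, hfH, hHg⟩ := LatticeHom.exists_between f g hfg
  exact ⟨H, map_sup H, map_inf H, fun x =>
    ⟨(h21 x).trans ((InfHom.le_envelope le_rfl).trans (hfH x)),
      (hHg x).trans (coverEnvelope_le Ψ₁ x)⟩⟩

/-- Combination of the separation lemma with Kubiś' theorem: a lattice homomorphism
squeezed between `Ψ₂` and `Ψ₁`. -/
theorem sandwich_lattice_hom {L B : Type*} [DistribLattice L]
    [CompleteBooleanAlgebra B]
    (Ψ₂ Φ₂ Φ₁ Ψ₁ : L → B)
    (h21 : ∀ x, Ψ₂ x ≤ Φ₂ x) (h22 : ∀ x, Φ₂ x ≤ Φ₁ x) (h23 : ∀ x, Φ₁ x ≤ Ψ₁ x)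
    (hΨ₂ : ∀ x y, Ψ₂ (x ⊓ y) ≤ Ψ₂ x ⊓ Ψ₂ y)
    (hΦ₂ : ∀ x y, Φ₂ x ⊓ Φ₂ y ≤ Φ₂ (x ⊓ y))
    (hΦ₁ : ∀ x y, Φ₁ (x ⊔ y) ≤ Φ₁ x ⊔ Φ₁ y)
    (hΨ₁ : ∀ x y, Ψ₁ x ⊔ Ψ₁ y ≤ Ψ₁ (x ⊔ y)) :
    ∃ H : L → B, (∀ x y, H (x ⊔ y) = H x ⊔ H y) ∧
      (∀ x y, H (x ⊓ y) = H x ⊓ H y) ∧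
      ∀ x, Ψ₂ x ≤ H x ∧ H x ≤ Ψ₁ x :=
  sandwich_lattice_hom_general Ψ₂ Φ₂ Φ₁ Ψ₁ h21 h22 h23 hΦ₂ hΦ₁ hΨ₁
end

section
/- Let D ⊆ ℝ, ε ≥ 0, and let f : D → ℝ satisfy max{f(x), f(y)} − f(max{x, y}) ≤ ε for all x, y ∈ D. Then there exists an increasing (monotone nondecreasing) function g : D → ℝ such that |f(x) − g(x)| ≤ ε/2 for every x ∈ D. -/
/-!
If `f` drops by at most `ε` when going up (`f y ≤ f x + ε` for `y ≤ x`), then the running supremum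
`x ↦ ⨆ y ≤ x, f y` is monotone and lies between `f` and `f + ε`; shifting it down by `ε / 2`
gives an increasing function within `ε / 2` of `f`.
-/

open Set

section RunningSup

variable {α : Type*} [Preorder α]

noncomputable def runningSup (f : α → ℝ) (x : α) : ℝ := ⨆ y : Iic x, f y

variable {f : α → ℝ} {ε : ℝ}

lemma bddAbove_range_restrict_Iic (hf : ∀ ⦃x y⦄, y ≤ x → f y ≤ f x + ε) (x : α) :
    BddAbove (range fun y : Iic x => f y) :=
  ⟨f x + ε, by rintro _ ⟨y, rfl⟩; exact hf y.2⟩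

lemma le_runningSup (hf : ∀ ⦃x y⦄, y ≤ x → f y ≤ f x + ε) (x : α) : f x ≤ runningSup f x :=
  le_ciSup (f := fun y : Iic x => f y) (bddAbove_range_restrict_Iic hf x) ⟨x, le_rfl⟩

lemma runningSup_le (hf : ∀ ⦃x y⦄, y ≤ x → f y ≤ f x + ε) (x : α) :
    runningSup f x ≤ f x + ε :=
  have : Nonempty (Iic x) := ⟨⟨x, le_rfl⟩⟩
  ciSup_le fun y => hf y.2

lemma monotone_runningSup (hf : ∀ ⦃x y⦄, y ≤ x → f y ≤ f x + ε) : Monotone (runningSup f) := by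
  intro a b hab
  have : Nonempty (Iic a) := ⟨⟨a, le_rfl⟩⟩
  exact ciSup_le fun y =>
    le_ciSup (f := fun y : Iic b => f y) (bddAbove_range_restrict_Iic hf b) ⟨y, y.2.trans hab⟩

theorem exists_monotone_abs_sub_le_half (hf : ∀ ⦃x y⦄, y ≤ x → f y ≤ f x + ε) :
    ∃ g : α → ℝ, Monotone g ∧ ∀ x, |f x - g x| ≤ ε / 2 := by
  refine ⟨fun x => runningSup f x - ε / 2, fun a b hab => ?_, fun x => ?_⟩
  · exact sub_le_sub_right (monotone_runningSup hf hab) _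
  · have hlower := le_runningSup hf x
    have hupper := runningSup_le hf x
    rw [abs_le]
    constructor <;> linarith

end RunningSup

lemma le_add_of_max_sub_apply_max_le {α : Type*} [LinearOrder α] {f : α → ℝ} {ε : ℝ}
    (hf : ∀ x y, max (f x) (f y) - f (max x y) ≤ ε) ⦃x y : α⦄ (hyx : y ≤ x) :
    f y ≤ f x + ε := by
  have := hf y x
  rw [max_eq_right hyx] at this
  linarith [le_max_left (f y) (f x)]

theorem approx_increasing_stability_general (D : Set ℝ) (ε : ℝ)
    (f : D → ℝ)
    (hf : ∀ x y : D, max (f x) (f y) - f (max x y) ≤ ε) :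
    ∃ g : D → ℝ, Monotone g ∧ ∀ x : D, |f x - g x| ≤ ε / 2 :=
  exists_monotone_abs_sub_le_half (le_add_of_max_sub_apply_max_le hf)

/-- Corollary: stability of approximately increasing functions. -/
theorem approx_increasing_stability (D : Set ℝ) (ε : ℝ) (hε : 0 ≤ ε)
    (f : D → ℝ)
    (hf : ∀ x y : D, max (f x) (f y) - f (max x y) ≤ ε) :
    ∃ g : D → ℝ, Monotone g ∧ ∀ x : D, |f x - g x| ≤ ε / 2 :=
  approx_increasing_stability_general D ε f hf
end

section
/- Let D ⊆ ℝ, ε ≥ 0, and let f : D → ℝ satisfy f(max{x, y}) − min{f(x), f(y)} ≤ ε for all x, y ∈ D. Then there exists a decreasing (monotone nonincreasing) function g : D → ℝ such that |f(x) − g(x)| ≤ ε/2 for every x ∈ D. -/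
/-!
If `f y ≤ f x + ε` whenever `x ≤ y`, the tail supremum `x ↦ sup_{y ≥ x} f y` is decreasing and
lies between `f x` and `f x + ε`; shifting it down by `ε / 2` gives the approximation.
-/

open Set

section TailSup

variable {α : Type*} [Preorder α] {f : α → ℝ} {ε : ℝ}

noncomputable def tailSup (f : α → ℝ) (x : α) : ℝ := sSup (f '' Ici x)

theorem bddAbove_image_Ici (hf : ∀ x y, x ≤ y → f y ≤ f x + ε) (x : α) :
    BddAbove (f '' Ici x) :=
  ⟨f x + ε, forall_mem_image.2 fun _ hy => hf x _ hy⟩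

theorem tailSup_antitone (hf : ∀ x y, x ≤ y → f y ≤ f x + ε) : Antitone (tailSup f) :=
  fun _ y hxy => csSup_le_csSup (bddAbove_image_Ici hf _) ((nonempty_Ici (a := y)).image f)
    (image_mono (Ici_subset_Ici.2 hxy))

theorem le_tailSup (hf : ∀ x y, x ≤ y → f y ≤ f x + ε) (x : α) : f x ≤ tailSup f x :=
  le_csSup (bddAbove_image_Ici hf x) (mem_image_of_mem f self_mem_Ici)

theorem tailSup_le (hf : ∀ x y, x ≤ y → f y ≤ f x + ε) (x : α) : tailSup f x ≤ f x + ε :=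
  csSup_le (nonempty_Ici.image f) (forall_mem_image.2 fun _ hy => hf x _ hy)

end TailSup

theorem le_add_of_max_sub_min_le {α : Type*} [LinearOrder α] {f : α → ℝ} {ε : ℝ}
    (hf : ∀ x y, f (max x y) - min (f x) (f y) ≤ ε) {x y : α} (hxy : x ≤ y) :
    f y ≤ f x + ε := by
  have h := hf x y
  rw [max_eq_right hxy] at h
  linarith [min_le_left (f x) (f y)]

theorem approx_decreasing_stability_general (D : Set ℝ) (ε : ℝ)
    (f : D → ℝ)
    (hf : ∀ x y : D, f (max x y) - min (f x) (f y) ≤ ε) :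
    ∃ g : D → ℝ, Antitone g ∧ ∀ x : D, |f x - g x| ≤ ε / 2 := by
  have hmono : ∀ x y : D, x ≤ y → f y ≤ f x + ε := fun _ _ => le_add_of_max_sub_min_le hf
  refine ⟨fun x => tailSup f x - ε / 2, fun x y hxy => ?_, fun x => abs_le.2 ⟨?_, ?_⟩⟩
  · linarith [tailSup_antitone hmono hxy]
  · linarith [tailSup_le hmono x]
  · linarith [le_tailSup hmono x]

/-- Corollary: stability of approximately decreasing functions. -/
theorem approx_decreasing_stability (D : Set ℝ) (ε : ℝ) (hε : 0 ≤ ε)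
    (f : D → ℝ)
    (hf : ∀ x y : D, f (max x y) - min (f x) (f y) ≤ ε) :
    ∃ g : D → ℝ, Antitone g ∧ ∀ x : D, |f x - g x| ≤ ε / 2 :=
  approx_decreasing_stability_general D ε f hf
end

section
/- Let I ⊆ ℝ be an interval and ε ≥ 0. Assume f : I → ℝ satisfies min{f(x), f(y)} − ε ≤ f(tx + (1−t)y) ≤ max{f(x), f(y)} + ε for all x, y ∈ I and t ∈ [0,1]. Then there exists a monotone function g : I → ℝ (either nondecreasing or nonincreasing on I) such that |f(x) − g(x)| ≤ ε/2 for every x ∈ I. -/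
/-!
Every point between `x` and `y` is a convex combination of them, so `f z` lies within `ε` of the
range spanned by `f x` and `f y` whenever `z` lies between `x` and `y`. Hence `f` cannot have both
a drop and a rise by more than `ε`: however the two jumps interleave, an endpoint of one lies
between the endpoints of the other, and that bound contradicts the size of the jumps. So `f` is
`ε`-almost nondecreasing or `ε`-almost nonincreasing. In the first case the running supremum
`x ↦ sup {f a | a ∈ I, a ≤ x}` is nondecreasing and lies in `[f x, f x + ε]`; shifting it down by
`ε / 2` gives the approximant. The second case is the first one for the reversed order.
-/

open Set OrderDual

section AlmostMonotone

variable {α : Type*}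

def AlmostMonotoneOn [Preorder α] (f : α → ℝ) (s : Set α) (ε : ℝ) : Prop :=
  ∀ a ∈ s, ∀ b ∈ s, a ≤ b → f a ≤ f b + ε

def AlmostAntitoneOn [Preorder α] (f : α → ℝ) (s : Set α) (ε : ℝ) : Prop :=
  ∀ a ∈ s, ∀ b ∈ s, a ≤ b → f b ≤ f a + ε

theorem AlmostMonotoneOn.exists_monotoneOn_abs_sub_le [Preorder α] {f : α → ℝ} {s : Set α}
    {ε : ℝ} (h : AlmostMonotoneOn f s ε) :
    ∃ g : α → ℝ, MonotoneOn g s ∧ ∀ x ∈ s, |f x - g x| ≤ ε / 2 := by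
  have upper : ∀ x ∈ s, f x + ε ∈ upperBounds (f '' (s ∩ Iic x)) := by
    rintro x hx _ ⟨a, ⟨ha, hax⟩, rfl⟩
    exact h a ha x hx hax
  have mem : ∀ x ∈ s, f x ∈ f '' (s ∩ Iic x) := fun x hx => mem_image_of_mem f ⟨hx, le_rfl⟩
  refine ⟨fun x => sSup (f '' (s ∩ Iic x)) - ε / 2, fun x hx y hy hxy => ?_, fun x hx => ?_⟩
  · exact sub_le_sub_right (csSup_le_csSup ⟨_, upper y hy⟩ ⟨_, mem x hx⟩
      (image_mono (inter_subset_inter_right _ (Iic_subset_Iic.2 hxy)))) _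
  · have lower_le := le_csSup ⟨_, upper x hx⟩ (mem x hx)
    have le_upper := csSup_le ⟨_, mem x hx⟩ (upper x hx)
    rw [abs_le]
    constructor <;> linarith

theorem AlmostAntitoneOn.exists_antitoneOn_abs_sub_le [Preorder α] {f : α → ℝ} {s : Set α}
    {ε : ℝ} (h : AlmostAntitoneOn f s ε) :
    ∃ g : α → ℝ, AntitoneOn g s ∧ ∀ x ∈ s, |f x - g x| ≤ ε / 2 := by
  obtain ⟨g, hg, hfg⟩ := AlmostMonotoneOn.exists_monotoneOn_abs_sub_le (α := αᵒᵈ)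
    (f := f ∘ ofDual) (s := ofDual ⁻¹' s) fun a ha b hb hab => h b hb a ha hab
  exact ⟨g ∘ toDual, fun x hx y hy hxy => hg hy hx hxy, fun x hx => hfg (toDual x) hx⟩

theorem almostMonotoneOn_or_almostAntitoneOn [LinearOrder α] {f : α → ℝ} {s : Set α} {ε : ℝ}
    (hf : ∀ x ∈ s, ∀ y ∈ s, ∀ z ∈ s, z ∈ Icc x y →
      min (f x) (f y) - ε ≤ f z ∧ f z ≤ max (f x) (f y) + ε) :
    AlmostMonotoneOn f s ε ∨ AlmostAntitoneOn f s ε := by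
  by_contra! ⟨hinc, hdec⟩
  simp only [AlmostMonotoneOn, AlmostAntitoneOn, not_forall, not_le] at hinc hdec
  obtain ⟨a, ha, b, hb, hab, hdrop⟩ := hinc
  obtain ⟨c, hc, d, hd, hcd, hrise⟩ := hdec
  have hac : f a ≤ f c + ε := by
    rcases le_total a c with h | h
    · have := (hf a ha d hd c hc ⟨h, hcd⟩).1
      rcases min_le_iff.1 (by linarith : min (f a) (f d) ≤ f c + ε) with h' | h' <;> linarith
    · have := (hf c hc b hb a ha ⟨h, hab⟩).2
      rcases le_max_iff.1 (by linarith : f a - ε ≤ max (f c) (f b)) with h' | h' <;> linarith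
  have hdb : f d ≤ f b + ε := by
    rcases le_total d b with h | h
    · have := (hf c hc b hb d hd ⟨hcd, h⟩).2
      rcases le_max_iff.1 (by linarith : f d - ε ≤ max (f c) (f b)) with h' | h' <;> linarith
    · have := (hf a ha d hd b hb ⟨hab, h⟩).1
      rcases min_le_iff.1 (by linarith : min (f a) (f d) ≤ f b + ε) with h' | h' <;> linarith
  linarith

end AlmostMonotone

theorem sandwich_of_mem_Icc {f : ℝ → ℝ} {s : Set ℝ} {ε : ℝ}
    (hf : ∀ x ∈ s, ∀ y ∈ s, ∀ t ∈ Icc (0 : ℝ) 1,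
      min (f x) (f y) - ε ≤ f (t * x + (1 - t) * y) ∧
      f (t * x + (1 - t) * y) ≤ max (f x) (f y) + ε)
    {x y z : ℝ} (hx : x ∈ s) (hy : y ∈ s) (hz : z ∈ Icc x y) :
    min (f x) (f y) - ε ≤ f z ∧ f z ≤ max (f x) (f y) + ε := by
  rw [← segment_eq_Icc (hz.1.trans hz.2)] at hz
  obtain ⟨t, u, ht, hu, htu, rfl⟩ := hz
  obtain rfl : u = 1 - t := by linarith
  simpa only [smul_eq_mul] using hf x hx y hy t ⟨ht, by linarith⟩

theorem approx_monotone_stability_general (I : Set ℝ)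
    (ε : ℝ) (f : ℝ → ℝ)
    (hf : ∀ x ∈ I, ∀ y ∈ I, ∀ t ∈ Set.Icc (0 : ℝ) 1,
      min (f x) (f y) - ε ≤ f (t * x + (1 - t) * y) ∧
      f (t * x + (1 - t) * y) ≤ max (f x) (f y) + ε) :
    ∃ g : ℝ → ℝ, (MonotoneOn g I ∨ AntitoneOn g I) ∧
      ∀ x ∈ I, |f x - g x| ≤ ε / 2 := by
  rcases almostMonotoneOn_or_almostAntitoneOn fun x hx y hy z _ hz =>
      sandwich_of_mem_Icc hf hx hy hz with h | h
  · obtain ⟨g, hg, hfg⟩ := h.exists_monotoneOn_abs_sub_le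
    exact ⟨g, Or.inl hg, hfg⟩
  · obtain ⟨g, hg, hfg⟩ := h.exists_antitoneOn_abs_sub_le
    exact ⟨g, Or.inr hg, hfg⟩

/-- Theorem (Förg-Rob, Nikodem, Páles): stability of approximately monotone
functions on an interval. -/
theorem approx_monotone_stability (I : Set ℝ) (hI : Convex ℝ I)
    (ε : ℝ) (hε : 0 ≤ ε) (f : ℝ → ℝ)
    (hf : ∀ x ∈ I, ∀ y ∈ I, ∀ t ∈ Set.Icc (0 : ℝ) 1,
      min (f x) (f y) - ε ≤ f (t * x + (1 - t) * y) ∧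
      f (t * x + (1 - t) * y) ≤ max (f x) (f y) + ε) :
    ∃ g : ℝ → ℝ, (MonotoneOn g I ∨ AntitoneOn g I) ∧
      ∀ x ∈ I, |f x - g x| ≤ ε / 2 :=
  approx_monotone_stability_general I ε f hf
end

section
/- Let X and Y be distributive lattices, with Y conditionally complete. Suppose maps f : X → Y and φ, ψ : X × X → Y satisfy: (1) φ(z,z) ≤ φ(x,y) whenever x ≤ z and y ≤ z; (2) ψ(x,y) ≤ ψ(z,z) whenever x ≤ z and y ≤ z; and (3) φ(x,y) ∧ f(x ∨ y) ≤ f(x) ∨ f(y) ≤ f(x ∨ y) ∨ ψ(x,y) for all x, y ∈ X. Then for every n ≥ 1 and all x₁, …, xₙ ∈ X, writing x = x₁ ∨ … ∨ xₙ, we have φ(x,x) ∧ f(x) ≤ f(x₁) ∨ … ∨ f(xₙ) ≤ f(x) ∨ ψ(x,x). -/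
/-!
Induct on the number of elements, writing the join as `b ∨ y` with `y` the join of all but one.
For the lower bound, monotonicity of `φ` shrinks `φ(b ∨ y, b ∨ y)` to both `φ(b, y)` (so that
the two-element estimate applies to `f(b ∨ y)`) and `φ(y, y)` (so that the induction hypothesis
applies to `f y`); distributivity of `Y` lets the meet pass through `f b ∨ f y`.
For the upper bound, the two-element estimate and the induction hypothesis each contribute an
error term, `ψ(b, y)` and `ψ(y, y)`, and monotonicity of `ψ` absorbs both into
`ψ(b ∨ y, b ∨ y)`.
-/

namespace Finset

variable {ι X Y : Type*} [SemilatticeSup X] {f : X → Y} {φ ψ : X × X → Y}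

theorem inf_map_sup'_le_sup'_map [DistribLattice Y]
    (hφ : ∀ x y z : X, x ≤ z → y ≤ z → φ (z, z) ≤ φ (x, y))
    (hf : ∀ x y : X, φ (x, y) ⊓ f (x ⊔ y) ≤ f x ⊔ f y)
    {s : Finset ι} (hs : s.Nonempty) (xs : ι → X) :
    φ (s.sup' hs xs, s.sup' hs xs) ⊓ f (s.sup' hs xs) ≤ s.sup' hs (f ∘ xs) := by
  induction hs using Nonempty.cons_induction with
  | singleton b => simp
  | cons b s hb hs ih =>
    rw [sup'_cons hs, sup'_cons hs]
    set y := s.sup' hs xs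
    have hby : xs b ≤ xs b ⊔ y := le_sup_left
    have hyx : y ≤ xs b ⊔ y := le_sup_right
    calc φ (xs b ⊔ y, xs b ⊔ y) ⊓ f (xs b ⊔ y)
        ≤ φ (xs b ⊔ y, xs b ⊔ y) ⊓ (f (xs b) ⊔ f y) :=
          le_inf inf_le_left ((inf_le_inf_right _ (hφ _ _ _ hby hyx)).trans (hf _ _))
      _ = φ (xs b ⊔ y, xs b ⊔ y) ⊓ f (xs b) ⊔ φ (xs b ⊔ y, xs b ⊔ y) ⊓ f y := inf_sup_left _ _ _
      _ ≤ f (xs b) ⊔ φ (y, y) ⊓ f y :=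
          sup_le_sup inf_le_right (inf_le_inf_right _ (hφ _ _ _ hyx hyx))
      _ ≤ f (xs b) ⊔ s.sup' hs (f ∘ xs) := sup_le_sup_left ih _

theorem sup'_map_le_map_sup'_sup [SemilatticeSup Y]
    (hψ : ∀ x y z : X, x ≤ z → y ≤ z → ψ (x, y) ≤ ψ (z, z))
    (hf : ∀ x y : X, f x ⊔ f y ≤ f (x ⊔ y) ⊔ ψ (x, y))
    {s : Finset ι} (hs : s.Nonempty) (xs : ι → X) :
    s.sup' hs (f ∘ xs) ≤ f (s.sup' hs xs) ⊔ ψ (s.sup' hs xs, s.sup' hs xs) := by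
  induction hs using Nonempty.cons_induction with
  | singleton b => simp
  | cons b s hb hs ih =>
    rw [sup'_cons hs, sup'_cons hs]
    set y := s.sup' hs xs
    have hby : xs b ≤ xs b ⊔ y := le_sup_left
    have hyx : y ≤ xs b ⊔ y := le_sup_right
    calc f (xs b) ⊔ s.sup' hs (f ∘ xs)
        ≤ f (xs b) ⊔ (f y ⊔ ψ (y, y)) := sup_le_sup_left ih _
      _ = (f (xs b) ⊔ f y) ⊔ ψ (y, y) := (sup_assoc _ _ _).symm
      _ ≤ (f (xs b ⊔ y) ⊔ ψ (xs b, y)) ⊔ ψ (y, y) := sup_le_sup_right (hf _ _) _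
      _ ≤ f (xs b ⊔ y) ⊔ ψ (xs b ⊔ y, xs b ⊔ y) :=
          sup_le (sup_le_sup_left (hψ _ _ _ hby hyx) _) (le_sup_of_le_right (hψ _ _ _ hyx hyx))

end Finset

/-- Inequality (3) of the paper: the finite-join estimate, proved by induction. -/
theorem finite_join_estimate {X Y : Type*} [DistribLattice X]
    [ConditionallyCompleteLattice Y]
    (hYdistrib : ∀ a b c : Y, a ⊓ (b ⊔ c) = (a ⊓ b) ⊔ (a ⊓ c))
    (f : X → Y) (φ ψ : X × X → Y)
    (hφ : ∀ x y z : X, x ≤ z → y ≤ z → φ (z, z) ≤ φ (x, y))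
    (hψ : ∀ x y z : X, x ≤ z → y ≤ z → ψ (x, y) ≤ ψ (z, z))
    (hf₁ : ∀ x y : X, φ (x, y) ⊓ f (x ⊔ y) ≤ f x ⊔ f y)
    (hf₂ : ∀ x y : X, f x ⊔ f y ≤ f (x ⊔ y) ⊔ ψ (x, y)) :
    ∀ (n : ℕ) (xs : Fin (n + 1) → X) (x : X),
      x = Finset.univ.sup' Finset.univ_nonempty xs →
      φ (x, x) ⊓ f x ≤ Finset.univ.sup' Finset.univ_nonempty (fun i => f (xs i)) ∧
      Finset.univ.sup' Finset.univ_nonempty (fun i => f (xs i)) ≤ f x ⊔ ψ (x, x) := by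
  intro n xs x hx
  subst hx
  let _ : DistribLattice Y := DistribLattice.ofInfSupLe fun a b c => (hYdistrib a b c).le
  exact ⟨Finset.inf_map_sup'_le_sup'_map hφ hf₁ _ xs, Finset.sup'_map_le_map_sup'_sup hψ hf₂ _ xs⟩
end

section
/- Let X and Y be distributive lattices, with Y conditionally complete and satisfying the dual to the infinite distributive law. Suppose maps f : X → Y and φ, ψ : X × X → Y satisfy: (1) φ(z,z) ≤ φ(x,y) whenever x ≤ z and y ≤ z; (2) ψ(x,y) ≤ ψ(z,z) whenever x ≤ z and y ≤ z; and (3) φ(x,y) ∧ f(x ∨ y) ≤ f(x) ∨ f(y) ≤ f(x ∨ y) ∨ ψ(x,y) for all x, y ∈ X. Define Φ(x) = inf { f(x₁) ∨ … ∨ f(xₙ) : n ∈ ℕ, x₁, …, xₙ ∈ X, x = x₁ ∨ … ∨ xₙ }. Then Φ(x ∨ y) ≤ Φ(x) ∨ Φ(y) for all x, y ∈ X. -/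
/-!
Every value f(x₁) ⊔ … ⊔ f(xₙ) of a decomposition x = x₁ ⊔ … ⊔ xₙ is bounded below by
φ(x, x) ⊓ f(x): induct on n, using distributivity of Y, (1) and the left half of (3).
So the infima defining Φ are genuine. Concatenating decompositions of x and y gives one of
x ⊔ y, hence Φ(x ⊔ y) ≤ a ⊔ b for every value a at x and b at y, and the dual infinite
distributive law, applied once in each argument, turns this into Φ(x ⊔ y) ≤ Φ(x) ⊔ Φ(y).
-/

open Finset

theorem Fin.sup'_univ_append {α β : Type*} [SemilatticeSup β] {m n : ℕ} (F : α → β)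
    (a : Fin (m + 1) → α) (b : Fin (n + 1) → α) :
    univ.sup' univ_nonempty (fun i => F (Fin.append a b i)) =
      univ.sup' univ_nonempty (fun i => F (a i)) ⊔ univ.sup' univ_nonempty (fun i => F (b i)) := by
  refine le_antisymm (sup'_le _ _ fun i _ => ?_) (sup_le ?_ ?_)
  · induction i using Fin.addCases with
    | left i => simpa using le_sup_of_le_left (le_sup' (fun i => F (a i)) (mem_univ i))
    | right i => simpa using le_sup_of_le_right (le_sup' (fun i => F (b i)) (mem_univ i))
  · exact sup'_le _ _ fun i _ => by
      simpa using le_sup' (fun i => F (Fin.append a b i)) (mem_univ (Fin.castAdd _ i))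
  · exact sup'_le _ _ fun i _ => by
      simpa using le_sup' (fun i => F (Fin.append a b i)) (mem_univ (Fin.natAdd _ i))

section

variable {X Y : Type*}

def supDecompValues [SemilatticeSup X] [SemilatticeSup Y] (f : X → Y) (x : X) : Set Y :=
  {y : Y | ∃ (n : ℕ) (xs : Fin (n + 1) → X),
      x = univ.sup' univ_nonempty xs ∧ y = univ.sup' univ_nonempty (fun i => f (xs i))}

variable [SemilatticeSup X]

theorem apply_mem_supDecompValues [SemilatticeSup Y] (f : X → Y) (x : X) :
    f x ∈ supDecompValues f x :=
  ⟨0, fun _ => x, (sup'_const _ x).symm, (sup'_const _ (f x)).symm⟩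

theorem sup_mem_supDecompValues [SemilatticeSup Y] {f : X → Y} {x y : X} {a b : Y}
    (ha : a ∈ supDecompValues f x) (hb : b ∈ supDecompValues f y) :
    a ⊔ b ∈ supDecompValues f (x ⊔ y) := by
  obtain ⟨n, xs, rfl, rfl⟩ := ha
  obtain ⟨m, ys, rfl, rfl⟩ := hb
  exact ⟨n + 1 + m, Fin.append (m := n + 1) (n := m + 1) xs ys,
    (Fin.sup'_univ_append id xs ys).symm, (Fin.sup'_univ_append f xs ys).symm⟩

theorem inf_apply_sup'_le [DistribLattice Y] {ι : Type*} {F : X → Y} {c : Y} {x : X}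
    (hF : ∀ a b, a ≤ x → b ≤ x → c ⊓ F (a ⊔ b) ≤ F a ⊔ F b)
    {s : Finset ι} (hs : s.Nonempty) {g : ι → X} (hg : ∀ i ∈ s, g i ≤ x) :
    c ⊓ F (s.sup' hs g) ≤ s.sup' hs (fun i => F (g i)) := by
  induction hs using Finset.Nonempty.cons_induction with
  | singleton i => simp
  | cons i s hi hs ih =>
    simp only [mem_cons, forall_eq_or_imp] at hg
    rw [sup'_cons hs, sup'_cons hs]
    calc c ⊓ F (g i ⊔ s.sup' hs g)
        ≤ c ⊓ (F (g i) ⊔ F (s.sup' hs g)) :=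
          le_inf inf_le_left (hF _ _ hg.1 (sup'_le _ _ hg.2))
      _ = c ⊓ F (g i) ⊔ c ⊓ F (s.sup' hs g) := inf_sup_left _ _ _
      _ ≤ F (g i) ⊔ s.sup' hs (fun i => F (g i)) := sup_le_sup inf_le_right (ih hg.2)

theorem inf_apply_mem_lowerBounds_supDecompValues [DistribLattice Y] {F : X → Y} {c : Y}
    {x : X}
    (hF : ∀ a b, a ≤ x → b ≤ x → c ⊓ F (a ⊔ b) ≤ F a ⊔ F b) :
    c ⊓ F x ∈ lowerBounds (supDecompValues F x) := by
  rintro _ ⟨n, xs, rfl, rfl⟩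
  exact inf_apply_sup'_le hF univ_nonempty fun i _ => le_sup' xs (mem_univ i)

end

theorem le_csInf_sup_csInf {Y : Type*} [ConditionallyCompleteLattice Y]
    (hdual : ∀ (y : Y) (S : Set Y), S.Nonempty → BddBelow S →
      y ⊔ sInf S = sInf ((fun s => y ⊔ s) '' S))
    {S T : Set Y} (hS : S.Nonempty) (hS' : BddBelow S) (hT : T.Nonempty) (hT' : BddBelow T)
    {z : Y} (h : ∀ a ∈ S, ∀ b ∈ T, z ≤ a ⊔ b) : z ≤ sInf S ⊔ sInf T := by
  rw [hdual _ T hT hT']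
  refine le_csInf (hT.image _) ?_
  rintro _ ⟨b, hb, rfl⟩
  change z ≤ sInf S ⊔ b
  rw [sup_comm, hdual _ S hS hS']
  refine le_csInf (hS.image _) ?_
  rintro _ ⟨a, ha, rfl⟩
  exact (h a ha b hb).trans_eq (sup_comm a b)

theorem Phi_subadditive_general {X Y : Type*} [DistribLattice X]
    [ConditionallyCompleteLattice Y]
    (hYdistrib : ∀ a b c : Y, a ⊓ (b ⊔ c) = (a ⊓ b) ⊔ (a ⊓ c))
    (hYdualinf : ∀ (y : Y) (S : Set Y), S.Nonempty → BddBelow S →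
      y ⊔ sInf S = sInf ((fun s => y ⊔ s) '' S))
    (f : X → Y) (φ : X × X → Y)
    (hφ : ∀ x y z : X, x ≤ z → y ≤ z → φ (z, z) ≤ φ (x, y))
    (hf₁ : ∀ x y : X, φ (x, y) ⊓ f (x ⊔ y) ≤ f x ⊔ f y)
    (Φ : X → Y)
    (hΦ : ∀ x : X, Φ x = sInf {y : Y | ∃ (n : ℕ) (xs : Fin (n + 1) → X),
      x = Finset.univ.sup' Finset.univ_nonempty xs ∧
      y = Finset.univ.sup' Finset.univ_nonempty (fun i => f (xs i))}) :
    ∀ x y : X, Φ (x ⊔ y) ≤ Φ x ⊔ Φ y := by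
  let : DistribLattice Y := DistribLattice.ofInfSupLe fun a b c => (hYdistrib a b c).le
  have hbdd (x : X) : BddBelow (supDecompValues f x) :=
    ⟨φ (x, x) ⊓ f x, inf_apply_mem_lowerBounds_supDecompValues fun a b ha hb =>
      (inf_le_inf_right _ (hφ a b x ha hb)).trans (hf₁ a b)⟩
  intro x y
  rw [hΦ, hΦ, hΦ]
  exact le_csInf_sup_csInf hYdualinf ⟨_, apply_mem_supDecompValues f x⟩ (hbdd x)
    ⟨_, apply_mem_supDecompValues f y⟩ (hbdd y)
    fun a ha b hb => csInf_le (hbdd _) (sup_mem_supDecompValues ha hb)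

/-- Subadditivity (inequality (sub)) of the function `Φ` from the proof of Theorem 5. -/
theorem Phi_subadditive {X Y : Type*} [DistribLattice X]
    [ConditionallyCompleteLattice Y]
    (hYdistrib : ∀ a b c : Y, a ⊓ (b ⊔ c) = (a ⊓ b) ⊔ (a ⊓ c))
    (hYdualinf : ∀ (y : Y) (S : Set Y), S.Nonempty → BddBelow S →
      y ⊔ sInf S = sInf ((fun s => y ⊔ s) '' S))
    (f : X → Y) (φ ψ : X × X → Y)
    (hφ : ∀ x y z : X, x ≤ z → y ≤ z → φ (z, z) ≤ φ (x, y))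
    (hψ : ∀ x y z : X, x ≤ z → y ≤ z → ψ (x, y) ≤ ψ (z, z))
    (hf₁ : ∀ x y : X, φ (x, y) ⊓ f (x ⊔ y) ≤ f x ⊔ f y)
    (hf₂ : ∀ x y : X, f x ⊔ f y ≤ f (x ⊔ y) ⊔ ψ (x, y))
    (Φ : X → Y)
    (hΦ : ∀ x : X, Φ x = sInf {y : Y | ∃ (n : ℕ) (xs : Fin (n + 1) → X),
      x = Finset.univ.sup' Finset.univ_nonempty xs ∧
      y = Finset.univ.sup' Finset.univ_nonempty (fun i => f (xs i))}) :
    ∀ x y : X, Φ (x ⊔ y) ≤ Φ x ⊔ Φ y :=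
  Phi_subadditive_general hYdistrib hYdualinf f φ hφ hf₁ Φ hΦ
end

section
/- Let X and Y be distributive lattices, with Y conditionally complete and satisfying the dual to the infinite distributive law. Let N : Y → 2^Y be a function each of whose values is a nonempty bounded set, satisfying: (i) y ∈ N(y); (ii) if t, u ∈ N(z) and t ≤ y ≤ u, then y ∈ N(z); (iii) sup N(y) ∈ N(y) and inf N(y) ∈ N(y); (iv) if t ∈ N(u) and u ∨ y ∈ N(z), then t ∨ y ∈ N(z). Suppose f : X → Y satisfies f(x) ∨ f(y) ∈ N(f(x ∨ y)) for all x, y ∈ X. Define Φ(x) = inf { f(x₁) ∨ … ∨ f(xₙ) : n ∈ ℕ, x₁, …, xₙ ∈ X, x = x₁ ∨ … ∨ xₙ } and Ψ(x) = sup of the same set. Then Φ(x) ∈ N(f(x)) and Ψ(x) ∈ N(f(x)) for every x ∈ X. -/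
/-!
Induction on the number of joinands, using (iv) and the hypothesis on `f`, puts every
`f x₁ ⊔ ⋯ ⊔ f xₙ` with `x = x₁ ⊔ ⋯ ⊔ xₙ` into `N (f x)`. By (ii) and (iii) the set `N (f x)`
is order-convex and contains its own infimum and supremum, so it contains the infimum and
the supremum of each of its nonempty subsets.
-/

section ConditionallyComplete

variable {Y : Type*} [ConditionallyCompleteLattice Y] {M S : Set Y}

theorem Set.OrdConnected.csInf_mem_of_subset (hM : M.OrdConnected) (hMbdd : BddBelow M)
    (hInf : sInf M ∈ M) (hS : S.Nonempty) (hSM : S ⊆ M) : sInf S ∈ M := by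
  obtain ⟨s, hs⟩ := hS
  exact hM.out hInf (hSM hs)
    ⟨csInf_le_csInf hMbdd ⟨s, hs⟩ hSM, csInf_le (hMbdd.mono hSM) hs⟩

theorem Set.OrdConnected.csSup_mem_of_subset (hM : M.OrdConnected) (hMbdd : BddAbove M)
    (hSup : sSup M ∈ M) (hS : S.Nonempty) (hSM : S ⊆ M) : sSup S ∈ M := by
  obtain ⟨s, hs⟩ := hS
  exact hM.out (hSM hs) hSup
    ⟨le_csSup (hMbdd.mono hSM) hs, csSup_le_csSup hMbdd ⟨s, hs⟩ hSM⟩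

end ConditionallyComplete

theorem Finset.sup'_comp_mem_of_sup_mem {ι X Y : Type*} [SemilatticeSup X] [SemilatticeSup Y]
    (N : Y → Set Y) (hN1 : ∀ y, y ∈ N y)
    (hN4 : ∀ t u y z : Y, t ∈ N u → u ⊔ y ∈ N z → t ⊔ y ∈ N z)
    (f : X → Y) (hf : ∀ x y : X, f x ⊔ f y ∈ N (f (x ⊔ y)))
    {s : Finset ι} (hs : s.Nonempty) (g : ι → X) :
    s.sup' hs (f ∘ g) ∈ N (f (s.sup' hs g)) := by
  induction hs using Finset.Nonempty.cons_induction with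
  | singleton a => rw [Finset.sup'_singleton, Finset.sup'_singleton]; exact hN1 _
  | cons a s _ hs ih =>
    rw [Finset.sup'_cons hs, Finset.sup'_cons hs, sup_comm (g a), sup_comm ((f ∘ g) a)]
    exact hN4 _ _ _ _ ih (hf _ _)

theorem PhiPsi_in_neighborhood_general {X Y : Type*} [DistribLattice X]
    [ConditionallyCompleteLattice Y]
    (N : Y → Set Y)
    (hNbdd : ∀ y, BddAbove (N y) ∧ BddBelow (N y))
    (hN1 : ∀ y, y ∈ N y)
    (hN2 : ∀ z t u y : Y, t ∈ N z → u ∈ N z → t ≤ y → y ≤ u → y ∈ N z)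
    (hN3 : ∀ y, sSup (N y) ∈ N y ∧ sInf (N y) ∈ N y)
    (hN4 : ∀ t u y z : Y, t ∈ N u → u ⊔ y ∈ N z → t ⊔ y ∈ N z)
    (f : X → Y) (hf : ∀ x y : X, f x ⊔ f y ∈ N (f (x ⊔ y)))
    (Φ Ψ : X → Y)
    (hΦ : ∀ x : X, Φ x = sInf {y : Y | ∃ (n : ℕ) (xs : Fin (n + 1) → X),
      x = Finset.univ.sup' Finset.univ_nonempty xs ∧
      y = Finset.univ.sup' Finset.univ_nonempty (fun i => f (xs i))})
    (hΨ : ∀ x : X, Ψ x = sSup {y : Y | ∃ (n : ℕ) (xs : Fin (n + 1) → X),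
      x = Finset.univ.sup' Finset.univ_nonempty xs ∧
      y = Finset.univ.sup' Finset.univ_nonempty (fun i => f (xs i))}) :
    ∀ x : X, Φ x ∈ N (f x) ∧ Ψ x ∈ N (f x) := by
  intro x
  set S : Set Y := {y : Y | ∃ (n : ℕ) (xs : Fin (n + 1) → X),
      x = Finset.univ.sup' Finset.univ_nonempty xs ∧
      y = Finset.univ.sup' Finset.univ_nonempty (fun i => f (xs i))}
  have hSN : S ⊆ N (f x) := by
    rintro y ⟨n, xs, rfl, rfl⟩
    exact Finset.sup'_comp_mem_of_sup_mem N hN1 hN4 f hf _ xs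
  have hfxS : f x ∈ S :=
    ⟨0, fun _ => x, (Finset.sup'_const _ x).symm, (Finset.sup'_const _ (f x)).symm⟩
  have hconn : (N (f x)).OrdConnected :=
    ⟨fun t ht u hu y hy => hN2 _ t u y ht hu hy.1 hy.2⟩
  rw [hΦ, hΨ]
  exact ⟨hconn.csInf_mem_of_subset (hNbdd _).2 (hN3 _).2 ⟨_, hfxS⟩ hSN,
    hconn.csSup_mem_of_subset (hNbdd _).1 (hN3 _).1 ⟨_, hfxS⟩ hSN⟩

/-- Condition (psiphi) of the paper: `Φ(x), Ψ(x) ∈ N(f(x))` for all `x`. -/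
theorem PhiPsi_in_neighborhood {X Y : Type*} [DistribLattice X]
    [ConditionallyCompleteLattice Y]
    (hYdistrib : ∀ a b c : Y, a ⊓ (b ⊔ c) = (a ⊓ b) ⊔ (a ⊓ c))
    (hYdualinf : ∀ (y : Y) (S : Set Y), S.Nonempty → BddBelow S →
      y ⊔ sInf S = sInf ((fun s => y ⊔ s) '' S))
    (N : Y → Set Y)
    (hNne : ∀ y, (N y).Nonempty)
    (hNbdd : ∀ y, BddAbove (N y) ∧ BddBelow (N y))
    (hN1 : ∀ y, y ∈ N y)
    (hN2 : ∀ z t u y : Y, t ∈ N z → u ∈ N z → t ≤ y → y ≤ u → y ∈ N z)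
    (hN3 : ∀ y, sSup (N y) ∈ N y ∧ sInf (N y) ∈ N y)
    (hN4 : ∀ t u y z : Y, t ∈ N u → u ⊔ y ∈ N z → t ⊔ y ∈ N z)
    (f : X → Y) (hf : ∀ x y : X, f x ⊔ f y ∈ N (f (x ⊔ y)))
    (Φ Ψ : X → Y)
    (hΦ : ∀ x : X, Φ x = sInf {y : Y | ∃ (n : ℕ) (xs : Fin (n + 1) → X),
      x = Finset.univ.sup' Finset.univ_nonempty xs ∧
      y = Finset.univ.sup' Finset.univ_nonempty (fun i => f (xs i))})
    (hΨ : ∀ x : X, Ψ x = sSup {y : Y | ∃ (n : ℕ) (xs : Fin (n + 1) → X),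
      x = Finset.univ.sup' Finset.univ_nonempty xs ∧
      y = Finset.univ.sup' Finset.univ_nonempty (fun i => f (xs i))}) :
    ∀ x : X, Φ x ∈ N (f x) ∧ Ψ x ∈ N (f x) :=
  PhiPsi_in_neighborhood_general N hNbdd hN1 hN2 hN3 hN4 f hf Φ Ψ hΦ hΨ
end

section
/- Let X be a lattice, Y a Boolean algebra, and ε ∈ Y. Suppose f : X → Y satisfies f(x ∨ y) Δ (f(x) ∨ f(y)) ≤ ε for all x, y ∈ X, where Δ denotes symmetric difference. Define g : X → Y by g(x) = f(x) \ ε (the relative complement f(x) ∧ εᶜ). Then g(x ∨ y) = g(x) ∨ g(y) for all x, y ∈ X, and f(x) Δ g(x) ≤ ε for every x ∈ X. -/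
section GeneralizedCoheytingAlgebra

variable {α : Type*} [GeneralizedCoheytingAlgebra α] {a b c : α}

theorem sdiff_le_sdiff_of_le_sup (h : a ≤ b ⊔ c) : a \ c ≤ b \ c :=
  (sdiff_le_sdiff_right h).trans_eq sup_sdiff_right_self

theorem sdiff_eq_sdiff_of_symmDiff_le (h : symmDiff a b ≤ c) : a \ c = b \ c :=
  have ⟨hab, hba⟩ := symmDiff_le_iff.1 h
  le_antisymm (sdiff_le_sdiff_of_le_sup hab) (sdiff_le_sdiff_of_le_sup hba)

theorem symmDiff_sdiff_right_le (a b : α) : symmDiff a (a \ b) ≤ b :=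
  symmDiff_le_iff.2 ⟨le_sdiff_sup, sdiff_le.trans le_sup_left⟩

end GeneralizedCoheytingAlgebra

/-- The remark from the introduction: if `f(x ⊔ y) Δ (f(x) ⊔ f(y)) ≤ ε`, then
`g(x) = f(x) \ ε` is a join homomorphism with `f(x) Δ g(x) ≤ ε`. -/
theorem naive_boolean_correction {X Y : Type*} [Lattice X] [BooleanAlgebra Y]
    (ε : Y) (f : X → Y)
    (hf : ∀ x y : X, symmDiff (f (x ⊔ y)) (f x ⊔ f y) ≤ ε)
    (g : X → Y) (hg : ∀ x : X, g x = f x \ ε) :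
    (∀ x y : X, g (x ⊔ y) = g x ⊔ g y) ∧ ∀ x : X, symmDiff (f x) (g x) ≤ ε := by
  refine ⟨fun x y => ?_, fun x => ?_⟩
  · rw [hg, hg, hg, ← sup_sdiff, sdiff_eq_sdiff_of_symmDiff_le (hf x y)]
  · rw [hg]
    exact symmDiff_sdiff_right_le (f x) ε
end
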